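/- arXiv:1410.4231 — 2 statements merged into one kernel-verified Lean document; each statement's English description precedes it below -/
import Mathlib

section
/- Suppose that for all bounded measurable h, all N, and all ε > 0, P(max_{i ≤ M_N} |(1/m_N) Σ_{j=1}^{m_N} ω_N^{i,j} h(ξ_N^{i,j}) − μ·(π h)| ≥ ε) ≤ c₁ M_N exp(−c₂ m_N ε² / ‖h‖_∞²), where μ > 0 is a constant, the weights ω_N^{i,j} are positive and bounded by |ω|_∞, and π is a probability measure. Then for all bounded measurable h, all N, and all ε > 0, P(max_{i ≤ M_N} |Σ_{j=1}^{m_N} (ω_N^{i,j}/Σ_{j'} ω_N^{i,j'}) (h(ξ_N^{i,j}) − π h)| ≥ ε) ≤ 2 c₁ M_N exp(−c₂ m_N ε² μ² / (4 ‖h‖_∞²)). -/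
open MeasureTheory ProbabilityTheory Filter

/-- Sup norm of a real-valued function. -/
noncomputable def supNorm {X : Type*} (h : X → ℝ) : ℝ := ⨆ x, |h x|

lemma onesided {Ω : Type*} [MeasureSpace Ω] [IsProbabilityMeasure (ℙ : Measure Ω)]
    {X : Type*} [MeasurableSpace X] [Nonempty X]
    (M m : ℕ → ℕ) (hM : ∀ N, 0 < M N) (hm : ∀ N, 0 < m N)
    (ξ : ℕ → ℕ → ℕ → Ω → X) (w : ℕ → ℕ → ℕ → Ω → ℝ)
    (hw : ∀ N i j ω, 0 < w N i j ω)
    (π : Measure X) [IsProbabilityMeasure π]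
    (μc c₁ c₂ : ℝ) (hμc : 0 < μc) (hc₁ : 0 < c₁) (hc₂ : 0 < c₂)
    (hdev : ∀ (h : X → ℝ), Measurable h → (∃ B, ∀ x, |h x| ≤ B) → ∀ N, ∀ ε > (0 : ℝ),
      ℙ {ω | ε ≤ (Finset.range (M N)).sup' (Finset.nonempty_range_iff.mpr (hM N).ne')
          (fun i => |(1 / (m N : ℝ)) * ∑ j ∈ Finset.range (m N), w N i j ω * h (ξ N i j ω)
            - μc * ∫ x, h x ∂π|)}
        ≤ ENNReal.ofReal (c₁ * M N * Real.exp (-c₂ * m N * ε ^ 2 / (supNorm h) ^ 2)))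
    (h : X → ℝ) (hmeas : Measurable h) (B : ℝ) (hB : ∀ x, |h x| ≤ B)
    (N : ℕ) (ε : ℝ) (hε : 0 < ε) :
    ℙ {ω | ∃ i ∈ Finset.range (M N), ε ≤ ∑ j ∈ Finset.range (m N),
        (w N i j ω / ∑ j' ∈ Finset.range (m N), w N i j' ω)
          * (h (ξ N i j ω) - ∫ x, h x ∂π)}
      ≤ ENNReal.ofReal (c₁ * M N *
          Real.exp (-c₂ * m N * ε ^ 2 * μc ^ 2 / (4 * (supNorm h) ^ 2))) := by
  set c : ℝ := ∫ x, h x ∂π with hc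
  have hhble : ∀ x, |h x| ≤ supNorm h := fun x =>
    le_ciSup ⟨B, by rintro y ⟨x, rfl⟩; exact hB x⟩ x
  have hint : Integrable h π := by
    refine (integrable_const B).mono' hmeas.aestronglyMeasurable (ae_of_all _ fun x => ?_)
    simpa [Real.norm_eq_abs] using hB x
  have hcabs : |c| ≤ supNorm h := by
    calc |c| ≤ ∫ x, |h x| ∂π := by
          simpa [Real.norm_eq_abs] using norm_integral_le_integral_norm (f := h) (μ := π)
    _ ≤ ∫ _x, supNorm h ∂π := integral_mono_of_nonneg (ae_of_all _ fun x => abs_nonneg _)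
        (integrable_const _) (ae_of_all _ hhble)
    _ = supNorm h := by simp
  set sg : ℝ := ⨆ x, (h x - c) with hsg
  by_cases hcase : ε ≤ sg
  · -- main case
    set φ : X → ℝ := fun x => h x - c - ε with hφ
    have hφmeas : Measurable φ := (hmeas.sub measurable_const).sub measurable_const
    have hφbd : ∀ x, |φ x| ≤ B + |c| + ε := fun x => by
      have := hB x
      simp only [hφ]
      have h1 : |h x - c - ε| ≤ |h x| + |c| + |ε| := by
        calc |h x - c - ε| ≤ |h x - c| + |ε| := abs_sub _ _
        _ ≤ |h x| + |c| + |ε| := by linarith [abs_sub (h x) c]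
      calc |h x - c - ε| ≤ |h x| + |c| + |ε| := h1
      _ ≤ B + |c| + ε := by rw [abs_of_pos hε]; linarith
    have hφint : ∫ x, φ x ∂π = -ε := by
      have : ∫ x, (h x - (c + ε)) ∂π = c - (c + ε) := by
        rw [integral_sub hint (integrable_const _), integral_const]
        simp [hc]
      simp only [hφ]
      rw [show (fun x => h x - c - ε) = fun x => h x - (c + ε) by funext x; ring]
      rw [this]; ring
    have hφble : ∀ x, |φ x| ≤ supNorm φ := fun x =>
      le_ciSup ⟨B + |c| + ε, by rintro y ⟨x, rfl⟩; exact hφbd x⟩ x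
    have hφnonneg : 0 ≤ supNorm φ :=
      le_trans (abs_nonneg _) (hφble (Classical.arbitrary X))
    have hφpos : 0 < supNorm φ := by
      rcases hφnonneg.lt_or_eq with h' | h'
      · exact h'
      · exfalso
        have hz : ∀ x, φ x = 0 := fun x =>
          abs_eq_zero.mp (le_antisymm (h' ▸ hφble x) (abs_nonneg _))
        have : ∫ x, φ x ∂π = 0 := by simp [funext hz]
        rw [hφint] at this; linarith
    have hφle2h : supNorm φ ≤ 2 * supNorm h := by
      have hsg_le : sg ≤ supNorm h - c := by
        refine ciSup_le fun x => ?_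
        have := hhble x
        have := abs_le.mp (hhble x)
        linarith [this.2]
      refine ciSup_le fun x => ?_
      rw [abs_le]
      constructor
      · -- lower:  -(2 supNorm h) ≤ φ x, i.e. φ x ≥ -2‖h‖ : φ x = h x - c - ε ≥ ... use ε ≤ sg ≤ ‖h‖-c
        have h1 : ε ≤ supNorm h - c := le_trans hcase hsg_le
        have h2 := (abs_le.mp (hhble x)).1
        simp only [hφ]; linarith
      · have h2 := (abs_le.mp (hhble x)).2
        have h3 := (abs_le.mp hcabs).1
        simp only [hφ]; linarith
    have hhpos : 0 < supNorm h := by nlinarith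
    -- apply hdev to φ at level μc * ε
    have key := hdev φ hφmeas ⟨B + |c| + ε, hφbd⟩ N (μc * ε) (mul_pos hμc hε)
    have hsub : {ω | ∃ i ∈ Finset.range (M N), ε ≤ ∑ j ∈ Finset.range (m N),
          (w N i j ω / ∑ j' ∈ Finset.range (m N), w N i j' ω)
            * (h (ξ N i j ω) - c)} ⊆
        {ω | μc * ε ≤ (Finset.range (M N)).sup' (Finset.nonempty_range_iff.mpr (hM N).ne')
          (fun i => |(1 / (m N : ℝ)) * ∑ j ∈ Finset.range (m N), w N i j ω * φ (ξ N i j ω)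
            - μc * ∫ x, φ x ∂π|)} := by
      rintro ω ⟨i, hi, hle⟩
      set W : ℝ := ∑ j' ∈ Finset.range (m N), w N i j' ω with hW
      have hWpos : 0 < W :=
        Finset.sum_pos (fun j _ => hw N i j ω)
          (Finset.nonempty_range_iff.mpr (hm N).ne')
      have h1 : ε * W ≤ ∑ j ∈ Finset.range (m N), w N i j ω * (h (ξ N i j ω) - c) := by
        have : ∑ j ∈ Finset.range (m N), (w N i j ω / W) * (h (ξ N i j ω) - c)
            = (∑ j ∈ Finset.range (m N), w N i j ω * (h (ξ N i j ω) - c)) / W := by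
          rw [Finset.sum_div]
          exact Finset.sum_congr rfl fun j _ => by ring
        rw [this] at hle
        exact (le_div_iff₀ hWpos).mp hle
      have h2 : 0 ≤ ∑ j ∈ Finset.range (m N), w N i j ω * φ (ξ N i j ω) := by
        have : ∑ j ∈ Finset.range (m N), w N i j ω * φ (ξ N i j ω)
            = (∑ j ∈ Finset.range (m N), w N i j ω * (h (ξ N i j ω) - c)) - ε * W := by
          rw [hW, Finset.mul_sum, ← Finset.sum_sub_distrib]
          exact Finset.sum_congr rfl fun j _ => by simp only [hφ]; ring
        linarith [this ▸ sub_nonneg.mpr h1]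
      have hmpos : (0 : ℝ) < (m N : ℝ) := Nat.cast_pos.mpr (hm N)
      have h3 : μc * ε ≤ |(1 / (m N : ℝ)) * ∑ j ∈ Finset.range (m N), w N i j ω * φ (ξ N i j ω)
            - μc * ∫ x, φ x ∂π| := by
        rw [hφint]
        have h4 : 0 ≤ (1 / (m N : ℝ)) * ∑ j ∈ Finset.range (m N), w N i j ω * φ (ξ N i j ω) :=
          mul_nonneg (by positivity) h2
        rw [abs_of_nonneg (by nlinarith)]
        nlinarith
      refine le_trans h3 ?_
      exact Finset.le_sup' (fun i => |(1 / (m N : ℝ)) * ∑ j ∈ Finset.range (m N),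
        w N i j ω * φ (ξ N i j ω) - μc * ∫ x, φ x ∂π|) hi
    refine le_trans (measure_mono hsub) (le_trans key ?_)
    apply ENNReal.ofReal_le_ofReal
    have hexp : Real.exp (-c₂ * m N * (μc * ε) ^ 2 / supNorm φ ^ 2)
        ≤ Real.exp (-c₂ * m N * ε ^ 2 * μc ^ 2 / (4 * supNorm h ^ 2)) := by
      apply Real.exp_le_exp.mpr
      have hA : (0 : ℝ) ≤ c₂ * m N * ε ^ 2 * μc ^ 2 := by positivity
      have hφsq : supNorm φ ^ 2 ≤ 4 * supNorm h ^ 2 := by nlinarith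
      rw [div_le_div_iff₀ (by positivity) (by positivity)]
      nlinarith [mul_le_mul_of_nonneg_left hφsq hA]
    have : (0:ℝ) ≤ c₁ * M N := by positivity
    calc c₁ * ↑(M N) * Real.exp (-c₂ * ↑(m N) * (μc * ε) ^ 2 / supNorm φ ^ 2)
        ≤ c₁ * ↑(M N) * Real.exp (-c₂ * ↑(m N) * ε ^ 2 * μc ^ 2 / (4 * supNorm h ^ 2)) :=
          mul_le_mul_of_nonneg_left hexp this
      _ = _ := rfl
  · -- ε > sg : event empty
    have hempty : {ω : Ω | ∃ i ∈ Finset.range (M N), ε ≤ ∑ j ∈ Finset.range (m N),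
        (w N i j ω / ∑ j' ∈ Finset.range (m N), w N i j' ω)
          * (h (ξ N i j ω) - c)} = ∅ := by
      rw [Set.eq_empty_iff_forall_notMem]
      rintro ω ⟨i, hi, hle⟩
      set W : ℝ := ∑ j' ∈ Finset.range (m N), w N i j' ω with hW
      have hWpos : 0 < W :=
        Finset.sum_pos (fun j _ => hw N i j ω)
          (Finset.nonempty_range_iff.mpr (hm N).ne')
      have hgle : ∀ x, h x - c ≤ sg := fun x =>
        le_ciSup (f := fun x => h x - c) ⟨B + |c|, by
          rintro y ⟨x, rfl⟩
          show h x - c ≤ B + |c|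
          linarith [(abs_le.mp (hB x)).2, neg_abs_le c]⟩ x
      have hbound : ∑ j ∈ Finset.range (m N),
          (w N i j ω / W) * (h (ξ N i j ω) - c) ≤ sg := by
        have h1 : ∑ j ∈ Finset.range (m N), (w N i j ω / W) * (h (ξ N i j ω) - c)
            ≤ ∑ j ∈ Finset.range (m N), (w N i j ω / W) * sg := by
          refine Finset.sum_le_sum fun j _ => ?_
          exact mul_le_mul_of_nonneg_left (hgle _) (div_nonneg (hw N i j ω).le hWpos.le)
        have h2 : ∑ j ∈ Finset.range (m N), (w N i j ω / W) * sg = sg := by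
          rw [← Finset.sum_mul, ← Finset.sum_div, ← hW, div_self hWpos.ne']
          ring
        linarith
      push_neg at hcase
      linarith
    rw [hempty]
    simp

/-- Exponential deviation of the unnormalized island estimators implies a uniform
deviation inequality for the self-normalized island estimators. -/
theorem stmt2 {Ω : Type*} [MeasureSpace Ω] [IsProbabilityMeasure (ℙ : Measure Ω)]
    {X : Type*} [MeasurableSpace X] [Nonempty X]
    (M m : ℕ → ℕ) (hM : ∀ N, 0 < M N) (hm : ∀ N, 0 < m N)
    (ξ : ℕ → ℕ → ℕ → Ω → X) (w : ℕ → ℕ → ℕ → Ω → ℝ)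
    (wbd : ℝ) (hw : ∀ N i j ω, 0 < w N i j ω ∧ w N i j ω ≤ wbd)
    (π : Measure X) [IsProbabilityMeasure π]
    (μc c₁ c₂ : ℝ) (hμc : 0 < μc) (hc₁ : 0 < c₁) (hc₂ : 0 < c₂)
    (hdev : ∀ (h : X → ℝ), Measurable h → (∃ B, ∀ x, |h x| ≤ B) → ∀ N, ∀ ε > (0 : ℝ),
      ℙ {ω | ε ≤ (Finset.range (M N)).sup' (Finset.nonempty_range_iff.mpr (hM N).ne')
          (fun i => |(1 / (m N : ℝ)) * ∑ j ∈ Finset.range (m N), w N i j ω * h (ξ N i j ω)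
            - μc * ∫ x, h x ∂π|)}
        ≤ ENNReal.ofReal (c₁ * M N * Real.exp (-c₂ * m N * ε ^ 2 / (supNorm h) ^ 2))) :
    ∀ (h : X → ℝ), Measurable h → (∃ B, ∀ x, |h x| ≤ B) → ∀ N, ∀ ε > (0 : ℝ),
      ℙ {ω | ε ≤ (Finset.range (M N)).sup' (Finset.nonempty_range_iff.mpr (hM N).ne')
          (fun i => |∑ j ∈ Finset.range (m N),
            (w N i j ω / ∑ j' ∈ Finset.range (m N), w N i j' ω)
              * (h (ξ N i j ω) - ∫ x, h x ∂π)|)}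
        ≤ ENNReal.ofReal (2 * c₁ * M N *
            Real.exp (-c₂ * m N * ε ^ 2 * μc ^ 2 / (4 * (supNorm h) ^ 2))) := by
  rintro h hmeas ⟨B, hB⟩ N ε hε
  have hw' : ∀ N i j ω, 0 < w N i j ω := fun N i j ω => (hw N i j ω).1
  have b1 := onesided M m hM hm ξ w hw' π μc c₁ c₂ hμc hc₁ hc₂ hdev h hmeas B hB N ε hε
  have b2 := onesided M m hM hm ξ w hw' π μc c₁ c₂ hμc hc₁ hc₂ hdev (fun x => -h x)
    hmeas.neg B (fun x => by simpa using hB x) N ε hε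
  have hsn : supNorm (fun x => -h x) = supNorm h := by
    unfold supNorm; simp only [abs_neg]
  rw [hsn] at b2
  set Ep := {ω | ∃ i ∈ Finset.range (M N), ε ≤ ∑ j ∈ Finset.range (m N),
      (w N i j ω / ∑ j' ∈ Finset.range (m N), w N i j' ω)
        * (h (ξ N i j ω) - ∫ x, h x ∂π)} with hEp
  set En := {ω | ∃ i ∈ Finset.range (M N), ε ≤ ∑ j ∈ Finset.range (m N),
      (w N i j ω / ∑ j' ∈ Finset.range (m N), w N i j' ω)
        * ((fun x => -h x) (ξ N i j ω) - ∫ x, (fun x => -h x) x ∂π)} with hEn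
  have hsub : {ω | ε ≤ (Finset.range (M N)).sup' (Finset.nonempty_range_iff.mpr (hM N).ne')
      (fun i => |∑ j ∈ Finset.range (m N),
        (w N i j ω / ∑ j' ∈ Finset.range (m N), w N i j' ω)
          * (h (ξ N i j ω) - ∫ x, h x ∂π)|)} ⊆ Ep ∪ En := by
    intro ω hω
    simp only [Set.mem_setOf_eq] at hω
    obtain ⟨i, hi, heq⟩ := Finset.exists_mem_eq_sup' (Finset.nonempty_range_iff.mpr (hM N).ne')
      (fun i => |∑ j ∈ Finset.range (m N),
        (w N i j ω / ∑ j' ∈ Finset.range (m N), w N i j' ω)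
          * (h (ξ N i j ω) - ∫ x, h x ∂π)|)
    rw [heq] at hω
    rcases le_abs.mp hω with h1 | h1
    · exact Or.inl ⟨i, hi, h1⟩
    · refine Or.inr ⟨i, hi, ?_⟩
      have key : ∑ j ∈ Finset.range (m N),
          (w N i j ω / ∑ j' ∈ Finset.range (m N), w N i j' ω)
            * (-h (ξ N i j ω) - ∫ x, -h x ∂π)
          = -∑ j ∈ Finset.range (m N),
          (w N i j ω / ∑ j' ∈ Finset.range (m N), w N i j' ω)
            * (h (ξ N i j ω) - ∫ x, h x ∂π) := by
        rw [integral_neg, ← Finset.sum_neg_distrib]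
        exact Finset.sum_congr rfl fun j _ => by ring
      simpa [key] using h1
  calc ℙ {ω | ε ≤ (Finset.range (M N)).sup' (Finset.nonempty_range_iff.mpr (hM N).ne')
        (fun i => |∑ j ∈ Finset.range (m N),
          (w N i j ω / ∑ j' ∈ Finset.range (m N), w N i j' ω)
            * (h (ξ N i j ω) - ∫ x, h x ∂π)|)}
      ≤ ℙ (Ep ∪ En) := measure_mono hsub
    _ ≤ ℙ Ep + ℙ En := measure_union_le _ _
    _ ≤ ENNReal.ofReal (c₁ * M N *
          Real.exp (-c₂ * m N * ε ^ 2 * μc ^ 2 / (4 * (supNorm h) ^ 2)))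
        + ENNReal.ofReal (c₁ * M N *
          Real.exp (-c₂ * m N * ε ^ 2 * μc ^ 2 / (4 * (supNorm h) ^ 2))) := add_le_add b1 b2
    _ = ENNReal.ofReal (2 * c₁ * M N *
          Real.exp (-c₂ * m N * ε ^ 2 * μc ^ 2 / (4 * (supNorm h) ^ 2))) := by
        rw [← ENNReal.ofReal_add (by positivity) (by positivity)]
        congr 1
        ring
end

section
/- Under the strong mixing condition — there exist 0 < σ₋ < σ₊ < ∞ and a probability measure φ such that σ₋ φ(A) ≤ M_p(x, A) ≤ σ₊ φ(A) for all p, x, A, and the potentials are such that Q_p h(x) = M_p(g_{p+1} h)(x) with all g_p positive and bounded — set ρ = 1 − σ₋/σ₊. Then for all bounded measurable h, all ℓ < n: ‖(Q_{ℓ+1} ⋯ Q_{n−1}(h − η_n h)) / (η_{ℓ+1} Q_{ℓ+1} ⋯ Q_{n−1} 1_X)‖_∞ ≤ (ρ^{n−ℓ−1} / (1 − ρ)) osc(h), where osc(h) = sup_{x,x'} |h(x) − h(x')|. -/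
/-!
Write `Q_{m,n} = Q_m ⋯ Q_{n-1}`. The ratio `Q_{m,n} h / Q_{m,n} 1` at `x` is the mean of
`Q_{m+1,n} h / Q_{m+1,n} 1` under `M_m(x, ·)` reweighted by the positive function
`g_{m+1} Q_{m+1,n} 1`. By the mixing condition any two such reweighted kernels share a common
component of mass `σ₋/σ₊`, so each step contracts the oscillation by `ρ` (Dobrushin), and the
ratios for `Q_{ℓ+1,n}` lie within `ρ^{n-ℓ-1} osc h` of each other. The normalised flow makes
`η_n h` an `η_{ℓ+1}`-weighted mean of these same ratios, hence equally close to each of them.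
Finally, mixing also gives `Q_{ℓ+1,n} 1 (x) ≤ (σ₊/σ₋) η_{ℓ+1} Q_{ℓ+1,n} 1`, and
`σ₊/σ₋ = 1/(1 - ρ)`.
-/

open MeasureTheory ProbabilityTheory Filter

noncomputable def oscNorm {X : Type*} (h : X → ℝ) : ℝ := ⨆ p : X × X, |h p.1 - h p.2|

open scoped ENNReal

section

variable {X : Type*}

section Oscillation

lemma abs_sub_le_oscNorm {h : X → ℝ} {C : ℝ} (hC : ∀ x, |h x| ≤ C) (x y : X) :
    |h x - h y| ≤ oscNorm h := by
  refine le_ciSup (f := fun p : X × X => |h p.1 - h p.2|) ⟨2 * C, ?_⟩ (x, y)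
  rintro _ ⟨p, rfl⟩
  linarith [abs_sub (h p.1) (h p.2), hC p.1, hC p.2]

lemma oscNorm_nonneg (h : X → ℝ) : 0 ≤ oscNorm h :=
  Real.iSup_nonneg fun _ => abs_nonneg _

lemma oscNorm_le {h : X → ℝ} {c : ℝ} (hc : 0 ≤ c) (hh : ∀ x y, |h x - h y| ≤ c) :
    oscNorm h ≤ c :=
  Real.iSup_le (fun p => hh p.1 p.2) hc

lemma exists_abs_sub_le_oscNorm_div_two [Nonempty X] {h : X → ℝ} {C : ℝ}
    (hC : ∀ x, |h x| ≤ C) : ∃ c, ∀ x, |h x - c| ≤ oscNorm h / 2 := by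
  have hne : (Set.range h).Nonempty := Set.range_nonempty h
  have hbdd_above : BddAbove (Set.range h) :=
    ⟨C, by rintro _ ⟨x, rfl⟩; exact (abs_le.1 (hC x)).2⟩
  have hbdd_below : BddBelow (Set.range h) :=
    ⟨-C, by rintro _ ⟨x, rfl⟩; exact (abs_le.1 (hC x)).1⟩
  have hspread : sSup (Set.range h) - oscNorm h ≤ sInf (Set.range h) := by
    refine le_csInf hne ?_
    rintro _ ⟨y, rfl⟩
    rw [sub_le_iff_le_add']
    refine csSup_le hne ?_
    rintro _ ⟨x, rfl⟩
    linarith [(abs_le.1 (abs_sub_le_oscNorm hC x y)).2]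
  refine ⟨(sSup (Set.range h) + sInf (Set.range h)) / 2, fun x => abs_le.2 ⟨?_, ?_⟩⟩ <;>
    linarith [le_csSup hbdd_above ⟨x, rfl⟩, csInf_le hbdd_below ⟨x, rfl⟩]

end Oscillation

def BoundedMeasurable [MeasurableSpace X] (f : X → ℝ) : Prop :=
  Measurable f ∧ ∃ C, ∀ x, |f x| ≤ C

namespace BoundedMeasurable

variable [MeasurableSpace X] {f f' : X → ℝ}

lemma integrable (hf : BoundedMeasurable f) (μ : Measure X) [IsFiniteMeasure μ] :
    Integrable f μ :=
  let ⟨hm, C, hC⟩ := hf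
  Integrable.of_bound hm.aestronglyMeasurable C (ae_of_all _ hC)

lemma const (c : ℝ) : BoundedMeasurable fun _ : X => c :=
  ⟨measurable_const, |c|, fun _ => le_rfl⟩

lemma mul (hf : BoundedMeasurable f) (hf' : BoundedMeasurable f') :
    BoundedMeasurable fun x => f x * f' x := by
  obtain ⟨hm, C, hC⟩ := hf
  obtain ⟨hm', C', hC'⟩ := hf'
  refine ⟨hm.mul hm', C * C', fun x => ?_⟩
  rw [abs_mul]
  exact mul_le_mul (hC x) (hC' x) (abs_nonneg _) ((abs_nonneg _).trans (hC x))

lemma add (hf : BoundedMeasurable f) (hf' : BoundedMeasurable f') :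
    BoundedMeasurable fun x => f x + f' x := by
  obtain ⟨hm, C, hC⟩ := hf
  obtain ⟨hm', C', hC'⟩ := hf'
  exact ⟨hm.add hm', C + C', fun x => (abs_add_le _ _).trans (add_le_add (hC x) (hC' x))⟩

end BoundedMeasurable

section Doeblin

variable [MeasurableSpace X] {μ μ' φ : Measure X} {σ σm σp : ℝ≥0∞}

lemma integral_pos_of_forall_pos [IsProbabilityMeasure μ] {f : X → ℝ} (hf : Integrable f μ)
    (hpos : ∀ x, 0 < f x) : 0 < ∫ x, f x ∂μ := by
  rw [integral_pos_iff_support_of_nonneg (fun x => (hpos x).le) hf,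
    Set.eq_univ_of_forall fun x => Function.mem_support.2 (hpos x).ne']
  simp

lemma abs_div_sub_integral_div_le [IsProbabilityMeasure μ] {w F : X → ℝ} (hw : Integrable w μ)
    (hF : Integrable F μ) (hwpos : ∀ y, 0 < w y) {x : X} {D : ℝ}
    (hD : ∀ y, |F x / w x - F y / w y| ≤ D) :
    |F x / w x - (∫ y, F y ∂μ) / ∫ y, w y ∂μ| ≤ D := by
  have hμw := integral_pos_of_forall_pos hw hwpos
  set s := F x / w x
  have hpt : ∀ y, |s * w y - F y| ≤ w y * D := fun y => by
    rw [show s * w y - F y = w y * (s - F y / w y) by field_simp [(hwpos y).ne'], abs_mul,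
      abs_of_pos (hwpos y)]
    exact mul_le_mul_of_nonneg_left (hD y) (hwpos y).le
  have hdev : |s * (∫ y, w y ∂μ) - ∫ y, F y ∂μ| ≤ D * ∫ y, w y ∂μ := by
    rw [← integral_const_mul, ← integral_sub (hw.const_mul s) hF, mul_comm, ← integral_mul_const]
    exact abs_integral_le_integral_abs.trans
      (integral_mono ((hw.const_mul s).sub hF).abs (hw.mul_const D) hpt)
  rw [show s - (∫ y, F y ∂μ) / ∫ y, w y ∂μ = (s * (∫ y, w y ∂μ) - ∫ y, F y ∂μ) / ∫ y, w y ∂μ by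
      field_simp, abs_div, abs_of_pos hμw, div_le_iff₀ hμw]
  exact hdev

lemma integral_le_toReal_mul_integral (hσ : σ ≠ ∞) (hle : μ ≤ σ • φ) {f : X → ℝ} (hf : 0 ≤ f)
    (hfi : Integrable f φ) : ∫ x, f x ∂μ ≤ σ.toReal * ∫ x, f x ∂φ := by
  simpa [integral_smul_measure] using
    integral_mono_measure hle (ae_of_all _ hf) (hfi.smul_measure hσ)

lemma toReal_mul_integral_le_integral (hle : σ • φ ≤ μ) {f : X → ℝ} (hf : 0 ≤ f)
    (hfi : Integrable f μ) : σ.toReal * ∫ x, f x ∂φ ≤ ∫ x, f x ∂μ := by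
  simpa [integral_smul_measure] using integral_mono_measure hle (ae_of_all _ hf) hfi

lemma toReal_mul_integral_le_toReal_mul_integral (hσp : σp ≠ ∞) (hhi : μ ≤ σp • φ)
    (hlo : σm • φ ≤ μ') {F : X → ℝ} (hF0 : 0 ≤ F) (hFφ : Integrable F φ)
    (hFμ' : Integrable F μ') :
    σm.toReal * ∫ x, F x ∂μ ≤ σp.toReal * ∫ x, F x ∂μ' :=
  calc σm.toReal * ∫ x, F x ∂μ ≤ σm.toReal * (σp.toReal * ∫ x, F x ∂φ) :=
        mul_le_mul_of_nonneg_left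
          (integral_le_toReal_mul_integral hσp hhi hF0 hFφ) ENNReal.toReal_nonneg
    _ = σp.toReal * (σm.toReal * ∫ x, F x ∂φ) := by ring
    _ ≤ σp.toReal * ∫ x, F x ∂μ' :=
        mul_le_mul_of_nonneg_left
          (toReal_mul_integral_le_integral hlo hF0 hFμ') ENNReal.toReal_nonneg

lemma toReal_mul_integral_mul_integral_le (hσp : σp ≠ ∞) (hlo : σm • φ ≤ μ)
    (hhi : μ ≤ σp • φ) {F H : X → ℝ} (hF0 : 0 ≤ F) (hH0 : 0 ≤ H) (hFφ : Integrable F φ)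
    (hHμ : Integrable H μ) :
    σm.toReal * (∫ x, F x ∂μ) * ∫ x, H x ∂φ ≤ σp.toReal * (∫ x, F x ∂φ) * ∫ x, H x ∂μ :=
  calc σm.toReal * (∫ x, F x ∂μ) * ∫ x, H x ∂φ
      ≤ σm.toReal * (σp.toReal * ∫ x, F x ∂φ) * ∫ x, H x ∂φ :=
        mul_le_mul_of_nonneg_right (mul_le_mul_of_nonneg_left
          (integral_le_toReal_mul_integral hσp hhi hF0 hFφ) ENNReal.toReal_nonneg)
          (integral_nonneg hH0)
    _ = σp.toReal * (∫ x, F x ∂φ) * (σm.toReal * ∫ x, H x ∂φ) := by ring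
    _ ≤ σp.toReal * (∫ x, F x ∂φ) * ∫ x, H x ∂μ :=
        mul_le_mul_of_nonneg_left (toReal_mul_integral_le_integral hlo hH0 hHμ)
          (mul_nonneg ENNReal.toReal_nonneg (integral_nonneg hF0))

lemma abs_mul_integral_sub_mul_integral_le [IsFiniteMeasure μ] [IsFiniteMeasure φ]
    (hσp : σp ≠ ∞) (hlo : σm • φ ≤ μ) (hhi : μ ≤ σp • φ) {G v : X → ℝ}
    (hG : BoundedMeasurable G) (hG0 : 0 ≤ G) (hv : Measurable v) {E : ℝ} (hvE : ∀ y, |v y| ≤ E) :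
    |σp.toReal * (∫ y, G y ∂φ) * (∫ y, G y * v y ∂μ)
        - σm.toReal * (∫ y, G y ∂μ) * ∫ y, G y * v y ∂φ|
      ≤ (σp.toReal - σm.toReal) * E * (∫ y, G y ∂μ) * ∫ y, G y ∂φ := by
  have hGv : BoundedMeasurable fun y => G y * v y := hG.mul ⟨hv, E, hvE⟩
  have hshift : ∀ s : ℝ, |s| ≤ 1 →
      σm.toReal * (∫ y, G y ∂μ) * (E * (∫ y, G y ∂φ) + s * ∫ y, G y * v y ∂φ)
        ≤ σp.toReal * (∫ y, G y ∂φ) * (E * (∫ y, G y ∂μ) + s * ∫ y, G y * v y ∂μ) := by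
    intro s hs
    have hexpand : ∀ (ν : Measure X) [IsFiniteMeasure ν],
        ∫ y, G y * (E + s * v y) ∂ν = E * (∫ y, G y ∂ν) + s * ∫ y, G y * v y ∂ν := by
      intro ν _
      simp_rw [mul_add, mul_left_comm (G _) s, mul_comm (G _) E]
      rw [integral_add ((hG.integrable ν).const_mul E) ((hGv.integrable ν).const_mul s),
        integral_const_mul, integral_const_mul]
    have hH0 : ∀ y, 0 ≤ G y * (E + s * v y) := fun y => by
      refine mul_nonneg (hG0 y) ?_
      have : |s * v y| ≤ E := by
        rw [abs_mul]; exact (mul_le_of_le_one_left (abs_nonneg _) hs).trans (hvE y)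
      linarith [neg_abs_le (s * v y)]
    rw [← hexpand, ← hexpand]
    have hH : BoundedMeasurable fun y => G y * (E + s * v y) :=
      hG.mul ((BoundedMeasurable.const E).add ((BoundedMeasurable.const s).mul ⟨hv, E, hvE⟩))
    exact toReal_mul_integral_mul_integral_le hσp hlo hhi hG0 hH0 (hG.integrable φ)
      (hH.integrable μ)
  have hplus := hshift 1 (by norm_num)
  have hminus := hshift (-1) (by norm_num)
  rw [abs_le]
  constructor <;> linarith

lemma abs_integral_div_sub_toReal_div_mul_le [IsProbabilityMeasure μ] [IsProbabilityMeasure φ]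
    (hσp : σp ≠ ∞) (hlo : σm • φ ≤ μ) (hhi : μ ≤ σp • φ) {G v : X → ℝ}
    (hG : BoundedMeasurable G) (hGpos : ∀ y, 0 < G y) (hv : Measurable v) {E : ℝ}
    (hvE : ∀ y, |v y| ≤ E) :
    |(∫ y, G y * v y ∂μ) / (∫ y, G y ∂μ)
        - σm.toReal / σp.toReal * ((∫ y, G y * v y ∂φ) / ∫ y, G y ∂φ)|
      ≤ (1 - σm.toReal / σp.toReal) * E := by
  have hμG := integral_pos_of_forall_pos (hG.integrable μ) hGpos
  have hφG := integral_pos_of_forall_pos (hG.integrable φ) hGpos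
  have hb : 0 < σp.toReal := by
    have := integral_le_toReal_mul_integral hσp hhi (fun y => (hGpos y).le) (hG.integrable φ)
    exact pos_of_mul_pos_left (hμG.trans_le this) hφG.le
  have hkey := abs_mul_integral_sub_mul_integral_le hσp hlo hhi hG (fun y => (hGpos y).le) hv hvE
  have hdenom : 0 < σp.toReal * (∫ y, G y ∂μ) * ∫ y, G y ∂φ := by positivity
  calc _ = |σp.toReal * (∫ y, G y ∂φ) * (∫ y, G y * v y ∂μ)
          - σm.toReal * (∫ y, G y ∂μ) * ∫ y, G y * v y ∂φ|
          / (σp.toReal * (∫ y, G y ∂μ) * ∫ y, G y ∂φ) := by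
        rw [← abs_of_pos hdenom, ← abs_div]
        congr 1
        field_simp
    _ ≤ (σp.toReal - σm.toReal) * E * (∫ y, G y ∂μ) * (∫ y, G y ∂φ)
          / (σp.toReal * (∫ y, G y ∂μ) * ∫ y, G y ∂φ) := by gcongr
    _ = (1 - σm.toReal / σp.toReal) * E := by
        field_simp

/-- Dobrushin's contraction estimate. -/
lemma abs_integral_div_sub_integral_div_le [IsProbabilityMeasure μ] [IsProbabilityMeasure μ']
    [IsProbabilityMeasure φ] (hσp : σp ≠ ∞) (hlo : σm • φ ≤ μ) (hhi : μ ≤ σp • φ)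
    (hlo' : σm • φ ≤ μ') (hhi' : μ' ≤ σp • φ) {G u : X → ℝ} (hG : BoundedMeasurable G)
    (hGpos : ∀ y, 0 < G y) (hu : BoundedMeasurable u) :
    |(∫ y, G y * u y ∂μ) / (∫ y, G y ∂μ) - (∫ y, G y * u y ∂μ') / (∫ y, G y ∂μ')|
      ≤ (1 - σm.toReal / σp.toReal) * oscNorm u := by
  have := nonempty_of_isProbabilityMeasure μ
  obtain ⟨hum, C, hC⟩ := hu
  obtain ⟨c, hc⟩ := exists_abs_sub_le_oscNorm_div_two hC
  have hcentre : ∀ (ν : Measure X) [IsProbabilityMeasure ν],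
      (∫ y, G y * u y ∂ν) / (∫ y, G y ∂ν) = (∫ y, G y * (u y - c) ∂ν) / (∫ y, G y ∂ν) + c := by
    intro ν _
    have hνG := integral_pos_of_forall_pos (hG.integrable ν) hGpos
    simp_rw [mul_sub]
    rw [integral_sub ((hG.mul ⟨hum, C, hC⟩).integrable ν) ((hG.integrable ν).mul_const c),
      integral_mul_const]
    field_simp
    ring
  have hv : Measurable fun y => u y - c := hum.sub measurable_const
  have hμ := abs_integral_div_sub_toReal_div_mul_le hσp hlo hhi hG hGpos hv hc
  have hμ' := abs_integral_div_sub_toReal_div_mul_le hσp hlo' hhi' hG hGpos hv hc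
  rw [hcentre μ, hcentre μ']
  calc _ ≤ (1 - σm.toReal / σp.toReal) * (oscNorm u / 2)
        + (1 - σm.toReal / σp.toReal) * (oscNorm u / 2) := by
        refine le_trans (le_of_eq ?_) ((abs_sub _ _).trans (add_le_add hμ hμ'))
        congr 1
        ring
    _ = (1 - σm.toReal / σp.toReal) * oscNorm u := by ring

end Doeblin

section FeynmanKac

variable [MeasurableSpace X]

noncomputable def fkOp (K : Kernel X X) (G f : X → ℝ) (x : X) : ℝ := ∫ y, G y * f y ∂K x

/-- `fkProd M G m k` is `Q_m ∘ ⋯ ∘ Q_{m+k-1}` for `Q_p = fkOp (M p) (G p)`, i.e. the paper's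
`Q_{m,m+k}` when `G p = g_{p+1}`. -/
noncomputable def fkProd (M : ℕ → Kernel X X) (G : ℕ → X → ℝ) : ℕ → ℕ → (X → ℝ) → X → ℝ
  | _, 0, f => f
  | m, k + 1, f => fkOp (M m) (G m) (fkProd M G (m + 1) k f)

section fkOp

variable {K : Kernel X X} [IsMarkovKernel K] {G f f' : X → ℝ}

lemma BoundedMeasurable.fkOp (hG : BoundedMeasurable G) (hf : BoundedMeasurable f) :
    BoundedMeasurable (fkOp K G f) := by
  obtain ⟨hm, C, hC⟩ := hG.mul hf
  refine ⟨hm.stronglyMeasurable.integral_kernel.measurable, C, fun x => ?_⟩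
  simpa [_root_.fkOp] using
    norm_integral_le_of_norm_le_const (μ := K x) (f := fun y => G y * f y) (ae_of_all _ hC)

lemma fkOp_pos (hG : BoundedMeasurable G) (hGpos : ∀ y, 0 < G y) (hf : BoundedMeasurable f)
    (hfpos : ∀ y, 0 < f y) (x : X) : 0 < fkOp K G f x :=
  integral_pos_of_forall_pos ((hG.mul hf).integrable _) fun y => mul_pos (hGpos y) (hfpos y)

lemma fkOp_sub_mul (hG : BoundedMeasurable G) (hf : BoundedMeasurable f)
    (hf' : BoundedMeasurable f') (c : ℝ) (x : X) :
    fkOp K G (fun y => f y - c * f' y) x = fkOp K G f x - c * fkOp K G f' x := by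
  simp_rw [fkOp, mul_sub, mul_left_comm (G _) c]
  rw [integral_sub ((hG.mul hf).integrable _) (((hG.mul hf').integrable _).const_mul c),
    integral_const_mul]

end fkOp

section fkProd

variable {M : ℕ → Kernel X X} {G : ℕ → X → ℝ}

lemma fkProd_succ_right (m k : ℕ) (f : X → ℝ) :
    fkProd M G m (k + 1) f = fkProd M G m k (fkOp (M (m + k)) (G (m + k)) f) := by
  induction k generalizing m with
  | zero => rfl
  | succ k ih =>
    rw [fkProd, ih (m + 1), Nat.add_right_comm]
    rfl

lemma eq_fkProd {Qprod : ℕ → ℕ → (X → ℝ) → X → ℝ} (h0 : ∀ m f, Qprod m m f = f)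
    (hS : ∀ m n f, m ≤ n → Qprod m (n + 1) f = Qprod m n (fkOp (M n) (G n) f)) (m k : ℕ) :
    Qprod m (m + k) = fkProd M G m k := by
  induction k with
  | zero => funext f; exact h0 m f
  | succ k ih =>
    funext f
    rw [← add_assoc, hS m (m + k) f (Nat.le_add_right m k), ih, fkProd_succ_right]

variable [∀ p, IsMarkovKernel (M p)]

lemma BoundedMeasurable.fkProd (hG : ∀ p, BoundedMeasurable (G p)) {f : X → ℝ}
    (hf : BoundedMeasurable f) (m k : ℕ) : BoundedMeasurable (fkProd M G m k f) := by
  induction k generalizing m with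
  | zero => exact hf
  | succ k ih => exact (hG m).fkOp (ih (m + 1))

lemma fkProd_pos (hG : ∀ p, BoundedMeasurable (G p)) (hGpos : ∀ p y, 0 < G p y) {f : X → ℝ}
    (hf : BoundedMeasurable f) (hfpos : ∀ y, 0 < f y) (m k : ℕ) (x : X) :
    0 < fkProd M G m k f x := by
  induction k generalizing m x with
  | zero => exact hfpos x
  | succ k ih => exact fkOp_pos (hG m) (hGpos m) (hf.fkProd hG (m + 1) k) (ih (m + 1)) x

lemma fkProd_sub_const (hG : ∀ p, BoundedMeasurable (G p)) {f : X → ℝ}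
    (hf : BoundedMeasurable f) (c : ℝ) (m k : ℕ) (x : X) :
    fkProd M G m k (fun y => f y - c) x
      = fkProd M G m k f x - c * fkProd M G m k (fun _ => 1) x := by
  induction k generalizing m x with
  | zero => simp [fkProd]
  | succ k ih =>
    simp only [fkProd]
    rw [funext (ih (m + 1)), fkOp_sub_mul (hG m) (hf.fkProd hG _ _)
      ((BoundedMeasurable.const 1).fkProd hG _ _)]

lemma abs_fkProd_div_sub_le {φ : Measure X} [IsProbabilityMeasure φ] {σm σp : ℝ≥0∞}
    (hσp : σp ≠ ∞) (hσ : σm ≤ σp) (hmix : ∀ p x, σm • φ ≤ M p x ∧ M p x ≤ σp • φ)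
    (hG : ∀ p, BoundedMeasurable (G p)) (hGpos : ∀ p y, 0 < G p y) {f : X → ℝ}
    (hf : BoundedMeasurable f) (m k : ℕ) (x x' : X) :
    |fkProd M G m k f x / fkProd M G m k (fun _ => 1) x
        - fkProd M G m k f x' / fkProd M G m k (fun _ => 1) x'|
      ≤ (1 - σm.toReal / σp.toReal) ^ k * oscNorm f := by
  induction k generalizing m x x' with
  | zero =>
    obtain ⟨-, C, hC⟩ := hf
    simpa [fkProd] using abs_sub_le_oscNorm hC x x'
  | succ k ih =>
    set ρ := 1 - σm.toReal / σp.toReal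
    set F := fkProd M G (m + 1) k f
    set F1 := fkProd M G (m + 1) k (fun _ => 1)
    have hρ : 0 ≤ ρ := sub_nonneg.2
      (div_le_one_of_le₀ (ENNReal.toReal_mono hσp hσ) ENNReal.toReal_nonneg)
    have hF1 : BoundedMeasurable F1 := (BoundedMeasurable.const 1).fkProd hG _ _
    have hF1pos : ∀ y, 0 < F1 y := fkProd_pos hG hGpos (.const 1) (fun _ => one_pos) _ _
    -- the induction hypothesis bounds the oscillation, hence the size, of `F / F1`
    have hu : BoundedMeasurable fun y => F y / F1 y :=
      ⟨(hf.fkProd hG _ _).1.div hF1.1, |F x / F1 x| + ρ ^ k * oscNorm f, fun y => by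
        linarith [abs_sub_abs_le_abs_sub (F y / F1 y) (F x / F1 x), ih (m + 1) y x]⟩
    have hweight : ∀ z, fkProd M G m (k + 1) f z
        = ∫ y, G m y * F1 y * (F y / F1 y) ∂M m z := fun z => by
      change ∫ y, G m y * F y ∂M m z = _
      congr 1 with y
      field_simp [(hF1pos y).ne']
    rw [hweight x, hweight x']
    calc _ ≤ ρ * oscNorm fun y => F y / F1 y :=
          abs_integral_div_sub_integral_div_le hσp (hmix m x).1 (hmix m x).2 (hmix m x').1
            (hmix m x').2 ((hG m).mul hF1) (fun y => mul_pos (hGpos m y) (hF1pos y)) hu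
      _ ≤ ρ * (ρ ^ k * oscNorm f) := mul_le_mul_of_nonneg_left
          (oscNorm_le (mul_nonneg (pow_nonneg hρ k) (oscNorm_nonneg f)) (ih (m + 1))) hρ
      _ = ρ ^ (k + 1) * oscNorm f := by ring

lemma integral_mul_integral_fkProd_one {η : ℕ → Measure X} [∀ n, IsProbabilityMeasure (η n)]
    (hη : ∀ n h, BoundedMeasurable h →
      (∫ x, h x ∂η (n + 1)) * (∫ x, fkOp (M n) (G n) (fun _ => 1) x ∂η n)
        = ∫ x, fkOp (M n) (G n) h x ∂η n)
    (hG : ∀ p, BoundedMeasurable (G p)) {f : X → ℝ} (hf : BoundedMeasurable f) (m k : ℕ) :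
    (∫ x, f x ∂η (m + k)) * ∫ x, fkProd M G m k (fun _ => 1) x ∂η m
      = ∫ x, fkProd M G m k f x ∂η m := by
  induction k generalizing m with
  | zero => simp [fkProd]
  | succ k ih =>
    simp only [fkProd]
    rw [← hη m _ (hf.fkProd hG _ _), ← ih (m + 1),
      ← hη m _ ((BoundedMeasurable.const 1).fkProd hG _ _),
      show m + (k + 1) = m + 1 + k by omega, mul_assoc]

lemma toReal_mul_fkProd_one_le_integral {φ : Measure X} [IsProbabilityMeasure φ]
    {σm σp : ℝ≥0∞} (hσp : σp ≠ ∞) (hσ : σm ≤ σp)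
    (hmix : ∀ p x, σm • φ ≤ M p x ∧ M p x ≤ σp • φ)
    (hG : ∀ p, BoundedMeasurable (G p)) (hGpos : ∀ p y, 0 < G p y)
    (ν : Measure X) [IsProbabilityMeasure ν] (m k : ℕ) (x : X) :
    σm.toReal * fkProd M G m k (fun _ => 1) x
      ≤ σp.toReal * ∫ x', fkProd M G m k (fun _ => 1) x' ∂ν := by
  cases k with
  | zero => simpa [fkProd] using ENNReal.toReal_mono hσp hσ
  | succ k =>
    have hF1 : BoundedMeasurable (fkProd M G (m + 1) k fun _ => 1) :=
      (BoundedMeasurable.const 1).fkProd hG _ _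
    have hF1pos : ∀ y, 0 < fkProd M G (m + 1) k (fun _ => 1) y :=
      fkProd_pos hG hGpos (.const 1) (fun _ => one_pos) _ _
    have hpt : ∀ x', σm.toReal * fkProd M G m (k + 1) (fun _ => 1) x
        ≤ σp.toReal * fkProd M G m (k + 1) (fun _ => 1) x' := fun x' =>
      toReal_mul_integral_le_toReal_mul_integral hσp (hmix m x).2 (hmix m x').1
        (fun y => mul_nonneg (hGpos m y).le (hF1pos y).le) (((hG m).mul hF1).integrable φ)
        (((hG m).mul hF1).integrable _)
    rw [← integral_const_mul]
    calc σm.toReal * fkProd M G m (k + 1) (fun _ => 1) x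
        = ∫ _x', σm.toReal * fkProd M G m (k + 1) (fun _ => 1) x ∂ν := by simp
      _ ≤ ∫ x', σp.toReal * fkProd M G m (k + 1) (fun _ => 1) x' ∂ν :=
        integral_mono (integrable_const _)
          ((((BoundedMeasurable.const 1).fkProd hG m (k + 1)).integrable ν).const_mul _) hpt

lemma abs_fkProd_sub_integral_div_le {φ : Measure X} [IsProbabilityMeasure φ]
    {σm σp : ℝ≥0∞} (hσm : σm ≠ 0) (hσp : σp ≠ ∞) (hσ : σm ≤ σp)
    (hmix : ∀ p x, σm • φ ≤ M p x ∧ M p x ≤ σp • φ)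
    (hG : ∀ p, BoundedMeasurable (G p)) (hGpos : ∀ p y, 0 < G p y)
    {η : ℕ → Measure X} [∀ n, IsProbabilityMeasure (η n)]
    (hη : ∀ n h, BoundedMeasurable h →
      (∫ x, h x ∂η (n + 1)) * (∫ x, fkOp (M n) (G n) (fun _ => 1) x ∂η n)
        = ∫ x, fkOp (M n) (G n) h x ∂η n)
    {h : X → ℝ} (hh : BoundedMeasurable h) (m k : ℕ) (x : X) :
    |fkProd M G m k (fun y => h y - ∫ z, h z ∂η (m + k)) x|
        / ∫ x', fkProd M G m k (fun _ => 1) x' ∂η m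
      ≤ (1 - σm.toReal / σp.toReal) ^ k / (σm.toReal / σp.toReal) * oscNorm h := by
  set T1 := fkProd M G m k (fun _ => 1)
  set Th := fkProd M G m k h
  set c := ∫ z, h z ∂η (m + k)
  have hT1 : BoundedMeasurable T1 := (BoundedMeasurable.const 1).fkProd hG _ _
  have hT1pos : ∀ y, 0 < T1 y := fkProd_pos hG hGpos (.const 1) (fun _ => one_pos) _ _
  have hI := integral_pos_of_forall_pos (hT1.integrable (η m)) hT1pos
  have ha : 0 < σm.toReal := ENNReal.toReal_pos hσm (ne_top_of_le_ne_top hσp hσ)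
  have hmean : c = (∫ y, Th y ∂η m) / ∫ y, T1 y ∂η m :=
    eq_div_of_mul_eq hI.ne' (integral_mul_integral_fkProd_one hη hG hh m k)
  have hclose : |Th x / T1 x - c| ≤ (1 - σm.toReal / σp.toReal) ^ k * oscNorm h := by
    rw [hmean]
    exact abs_div_sub_integral_div_le (hT1.integrable _) ((hh.fkProd hG _ _).integrable _)
      hT1pos fun y => abs_fkProd_div_sub_le hσp hσ hmix hG hGpos hh m k x y
  have hratio : T1 x / ∫ y, T1 y ∂η m ≤ 1 / (σm.toReal / σp.toReal) := by
    rw [one_div_div, div_le_div_iff₀ hI ha]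
    linarith [toReal_mul_fkProd_one_le_integral hσp hσ hmix hG hGpos (η m) m k x]
  rw [fkProd_sub_const hG hh, show Th x - c * T1 x = T1 x * (Th x / T1 x - c) by
    field_simp [(hT1pos x).ne']]
  calc _ = T1 x / (∫ y, T1 y ∂η m) * |Th x / T1 x - c| := by
        rw [abs_mul, abs_of_pos (hT1pos x)]; ring
    _ ≤ 1 / (σm.toReal / σp.toReal) * ((1 - σm.toReal / σp.toReal) ^ k * oscNorm h) :=
        mul_le_mul hratio hclose (abs_nonneg _) (by positivity)
    _ = _ := by ring

end fkProd

end FeynmanKac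

end

theorem stmt6_general {X : Type*} [MeasurableSpace X]
    (M : ℕ → Kernel X X) [∀ p, IsMarkovKernel (M p)]
    (g : ℕ → X → ℝ) (hgmeas : ∀ p, Measurable (g p))
    (hgpos : ∀ p x, 0 < g p x) (B : ℝ) (hgbd : ∀ p x, g p x ≤ B)
    (σm σp : ENNReal) (hσm : 0 < σm) (hσmp : σm < σp) (hσp : σp < ⊤)
    (φ : Measure X) [IsProbabilityMeasure φ]
    (hmix : ∀ p x (A : Set X), MeasurableSet A →
      σm * φ A ≤ (M p) x A ∧ (M p) x A ≤ σp * φ A)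
    (Qop : ℕ → (X → ℝ) → X → ℝ)
    (hQop : ∀ p h x, Qop p h x = ∫ y, g (p + 1) y * h y ∂((M p) x))
    (Qprod : ℕ → ℕ → (X → ℝ) → X → ℝ)
    (hQprod0 : ∀ m h, Qprod m m h = h)
    (hQprodS : ∀ m n h, m ≤ n → Qprod m (n + 1) h = Qprod m n (Qop n h))
    (η : ℕ → Measure X) [∀ n, IsProbabilityMeasure (η n)]
    (hrec : ∀ n (h : X → ℝ), Measurable h → (∃ C, ∀ x, |h x| ≤ C) →
      (∫ x, h x ∂(η (n + 1))) * (∫ x, Qop n (fun _ => 1) x ∂(η n))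
        = ∫ x, Qop n h x ∂(η n))
    (ρ : ℝ) (hρ : ρ = 1 - (σm / σp).toReal) :
    ∀ (h : X → ℝ), Measurable h → (∃ C, ∀ x, |h x| ≤ C) → ∀ ℓ n, ℓ < n → ∀ x,
      |Qprod (ℓ + 1) n (fun y => h y - ∫ z, h z ∂(η n)) x|
          / (∫ x', Qprod (ℓ + 1) n (fun _ => 1) x' ∂(η (ℓ + 1)))
        ≤ (ρ ^ (n - ℓ - 1) / (1 - ρ)) * oscNorm h := by
  intro h hhm hhb ℓ n hℓn x
  obtain ⟨k, rfl⟩ : ∃ k, n = ℓ + 1 + k := ⟨n - (ℓ + 1), by omega⟩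
  obtain rfl : Qop = fun p => fkOp (M p) (g (p + 1)) := funext fun p => funext fun f =>
    funext (hQop p f)
  have hG : ∀ p, BoundedMeasurable (g (p + 1)) := fun p =>
    ⟨hgmeas _, B, fun y => abs_le.2 ⟨by linarith [hgpos (p + 1) y, hgbd (p + 1) y], hgbd _ y⟩⟩
  have hmix' : ∀ p x, σm • φ ≤ M p x ∧ M p x ≤ σp • φ := fun p x =>
    ⟨Measure.le_iff.2 fun A hA => (hmix p x A hA).1,
      Measure.le_iff.2 fun A hA => (hmix p x A hA).2⟩
  rw [eq_fkProd (G := fun p => g (p + 1)) hQprod0 hQprodS,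
    show ℓ + 1 + k - ℓ - 1 = k by omega, hρ, ENNReal.toReal_div, sub_sub_cancel]
  exact abs_fkProd_sub_integral_div_le hσm.ne' hσp.ne hσmp.le hmix' hG (fun p => hgpos (p + 1))
    (fun n f hf => hrec n f hf.1 hf.2) ⟨hhm, hhb⟩ (ℓ + 1) k x

/-- Under the strong mixing condition, the normalized Feynman-Kac operators contract
at geometric rate `ρ = 1 - σ₋/σ₊`:
`‖Q_{ℓ+1}⋯Q_{n-1}(h - η_n h) / (η_{ℓ+1} Q_{ℓ+1}⋯Q_{n-1} 1)‖_∞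
  ≤ ρ^{n-ℓ-1} osc(h)/(1-ρ)`. -/
theorem stmt6 {X : Type*} [MeasurableSpace X] [Nonempty X]
    (M : ℕ → Kernel X X) [∀ p, IsMarkovKernel (M p)]
    (g : ℕ → X → ℝ) (hgmeas : ∀ p, Measurable (g p))
    (hgpos : ∀ p x, 0 < g p x) (B : ℝ) (hgbd : ∀ p x, g p x ≤ B)
    (σm σp : ENNReal) (hσm : 0 < σm) (hσmp : σm < σp) (hσp : σp < ⊤)
    (φ : Measure X) [IsProbabilityMeasure φ]
    (hmix : ∀ p x (A : Set X), MeasurableSet A →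
      σm * φ A ≤ (M p) x A ∧ (M p) x A ≤ σp * φ A)
    (Qop : ℕ → (X → ℝ) → X → ℝ)
    (hQop : ∀ p h x, Qop p h x = ∫ y, g (p + 1) y * h y ∂((M p) x))
    (Qprod : ℕ → ℕ → (X → ℝ) → X → ℝ)
    (hQprod0 : ∀ m h, Qprod m m h = h)
    (hQprodS : ∀ m n h, m ≤ n → Qprod m (n + 1) h = Qprod m n (Qop n h))
    (η : ℕ → Measure X) [∀ n, IsProbabilityMeasure (η n)]
    (hrec : ∀ n (h : X → ℝ), Measurable h → (∃ C, ∀ x, |h x| ≤ C) →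
      (∫ x, h x ∂(η (n + 1))) * (∫ x, Qop n (fun _ => 1) x ∂(η n))
        = ∫ x, Qop n h x ∂(η n))
    (ρ : ℝ) (hρ : ρ = 1 - (σm / σp).toReal) :
    ∀ (h : X → ℝ), Measurable h → (∃ C, ∀ x, |h x| ≤ C) → ∀ ℓ n, ℓ < n → ∀ x,
      |Qprod (ℓ + 1) n (fun y => h y - ∫ z, h z ∂(η n)) x|
          / (∫ x', Qprod (ℓ + 1) n (fun _ => 1) x' ∂(η (ℓ + 1)))
        ≤ (ρ ^ (n - ℓ - 1) / (1 - ρ)) * oscNorm h :=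
  stmt6_general M g hgmeas hgpos B hgbd σm σp hσm hσmp hσp φ hmix Qop hQop Qprod hQprod0 hQprodS η
    hrec ρ hρ
end
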